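/- arXiv:1510.07255 — 2 statements merged into one kernel-verified Lean document; each statement's English description precedes it below -/
import Mathlib

section
/- The set ãut(Π_{2n}) := {[[A,B],[C,Aᵗ]] : A ∈ M_n(K) arbitrary, B ZD, C symmetric} is a Lie subalgebra of gl(2n,K) (it is closed under the commutator bracket), and it is sandwiched strictly between the derived algebra and the full automorphism algebra: {[[A,B],[C,Aᵗ]] : B, C ZD} ⊊ ãut(Π_{2n}) ⊊ aut(Π_{2n}). -/
open Matrix

/-- The Gram matrix `Π_{2n}`, in `n × n` blocks `[[0, 1ₙ], [1ₙ, 0]]`. -/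
noncomputable def PiGram (K : Type*) [Field K] (n : ℕ) :
    Matrix (Fin n ⊕ Fin n) (Fin n ⊕ Fin n) K :=
  Matrix.fromBlocks 0 1 1 0

/-- The Lie algebra `aut(Π_{2n}) = {X : Xᵀ J + J X = 0}`, as a set of matrices. -/
def autPiSet (K : Type*) [Field K] (n : ℕ) :
    Set (Matrix (Fin n ⊕ Fin n) (Fin n ⊕ Fin n) K) :=
  {X | Xᵀ * PiGram K n + PiGram K n * X = 0}

/-- The derived algebra `aut⁽¹⁾(Π_{2n})`: block matrices `[[A, B], [C, Aᵀ]]` with both `B`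
and `C` symmetric with zero diagonal (ZD). -/
def gOneSet (K : Type*) [Field K] (n : ℕ) :
    Set (Matrix (Fin n ⊕ Fin n) (Fin n ⊕ Fin n) K) :=
  {Z | ∃ A B C : Matrix (Fin n) (Fin n) K,
      B.IsSymm ∧ (∀ i, B i i = 0) ∧ C.IsSymm ∧ (∀ i, C i i = 0) ∧
      Z = Matrix.fromBlocks A B C Aᵀ}

/-- The algebra `ãut(Π_{2n}) = F(pe)(2n)`: block matrices `[[A, B], [C, Aᵀ]]` with `A`
arbitrary, `B` symmetric with zero diagonal (ZD) and `C` symmetric. -/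
def tildeAutSet (K : Type*) [Field K] (n : ℕ) :
    Set (Matrix (Fin n ⊕ Fin n) (Fin n ⊕ Fin n) K) :=
  {Z | ∃ A B C : Matrix (Fin n) (Fin n) K,
      B.IsSymm ∧ (∀ i, B i i = 0) ∧ C.IsSymm ∧
      Z = Matrix.fromBlocks A B C Aᵀ}

/-!
In characteristic 2 the condition `Xᵀ Π + Π X = 0` says exactly that `Π X` is symmetric, and the
derived algebra consists of the `X` for which `Π X` is moreover alternating (zero diagonal), while
`ãut(Π_{2n})` only asks the diagonal of the block `B` of `Π X = [[C, Aᵀ], [A, B]]` to vanish.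
Since `Π² = 1`, for `X, Y ∈ aut(Π_{2n})` one has `Π [X, Y] = N - Nᵀ = N + Nᵀ` with
`N = (Π X) Π (Π Y)`, which is alternating; hence `[aut, aut] ⊆ aut⁽¹⁾ ⊆ ãut`, and closure of `ãut`
under the bracket follows. The blocks `C = 1` and `B = 1` give the two strict inclusions.
-/

theorem Matrix.neg_eq_self_of_charTwo {R m m' : Type*} [Ring R] [CharP R 2] (M : Matrix m m' R) :
    -M = M :=
  Matrix.ext fun i j => CharTwo.neg_eq (M i j)

theorem Matrix.diag_add_transpose_self_eq_zero {R m : Type*} [Semiring R] [CharP R 2]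
    (N : Matrix m m R) (k : m) : (N + Nᵀ) k k = 0 :=
  CharTwo.add_self_eq_zero (N k k)

section

variable {K : Type*} [Field K] {n : ℕ}

namespace PiGram

theorem transpose : (PiGram K n)ᵀ = PiGram K n := by
  simp [PiGram, fromBlocks_transpose]

theorem mul_self : PiGram K n * PiGram K n = 1 := by
  simp [PiGram, fromBlocks_multiply, ← fromBlocks_one]

theorem mul_fromBlocks (A B C D : Matrix (Fin n) (Fin n) K) :
    PiGram K n * fromBlocks A B C D = fromBlocks C D A B := by
  simp [PiGram, fromBlocks_multiply]

end PiGram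

theorem gOneSet_subset_tildeAutSet : gOneSet K n ⊆ tildeAutSet K n := by
  rintro _ ⟨A, B, C, hB, hBd, hC, -, rfl⟩
  exact ⟨A, B, C, hB, hBd, hC, rfl⟩

variable [CharP K 2]

theorem mem_autPiSet_iff_isSymm {X : Matrix (Fin n ⊕ Fin n) (Fin n ⊕ Fin n) K} :
    X ∈ autPiSet K n ↔ (PiGram K n * X).IsSymm := by
  rw [autPiSet, Set.mem_ofPred_eq, add_eq_zero_iff_eq_neg, Matrix.neg_eq_self_of_charTwo,
    Matrix.IsSymm, transpose_mul, PiGram.transpose]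

theorem fromBlocks_mem_autPiSet_iff {A B C D : Matrix (Fin n) (Fin n) K} :
    fromBlocks A B C D ∈ autPiSet K n ↔ B.IsSymm ∧ C.IsSymm ∧ D = Aᵀ := by
  rw [mem_autPiSet_iff_isSymm, PiGram.mul_fromBlocks, isSymm_fromBlocks_iff]
  constructor
  · rintro ⟨hC, hDA, -, hB⟩
    exact ⟨hB, hC, by rw [← hDA, transpose_transpose]⟩
  · rintro ⟨hB, hC, rfl⟩
    exact ⟨hC, transpose_transpose A, rfl, hB⟩

theorem fromBlocks_mem_tildeAutSet_iff {A B C D : Matrix (Fin n) (Fin n) K} :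
    fromBlocks A B C D ∈ tildeAutSet K n ↔
      fromBlocks A B C D ∈ autPiSet K n ∧ ∀ i, B i i = 0 := by
  rw [fromBlocks_mem_autPiSet_iff]
  constructor
  · rintro ⟨A', B', C', hB, hBd, hC, h⟩
    obtain ⟨rfl, rfl, rfl, rfl⟩ := fromBlocks_inj.mp h
    exact ⟨⟨hB, hC, rfl⟩, hBd⟩
  · rintro ⟨⟨hB, hC, rfl⟩, hBd⟩
    exact ⟨A, B, C, hB, hBd, hC, rfl⟩

theorem fromBlocks_mem_gOneSet_iff {A B C D : Matrix (Fin n) (Fin n) K} :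
    fromBlocks A B C D ∈ gOneSet K n ↔
      fromBlocks A B C D ∈ autPiSet K n ∧ (∀ i, B i i = 0) ∧ ∀ i, C i i = 0 := by
  rw [fromBlocks_mem_autPiSet_iff]
  constructor
  · rintro ⟨A', B', C', hB, hBd, hC, hCd, h⟩
    obtain ⟨rfl, rfl, rfl, rfl⟩ := fromBlocks_inj.mp h
    exact ⟨⟨hB, hC, rfl⟩, hBd, hCd⟩
  · rintro ⟨⟨hB, hC, rfl⟩, hBd, hCd⟩
    exact ⟨A, B, C, hB, hBd, hC, hCd, rfl⟩

theorem mem_gOneSet_iff {X : Matrix (Fin n ⊕ Fin n) (Fin n ⊕ Fin n) K} :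
    X ∈ gOneSet K n ↔ (PiGram K n * X).IsSymm ∧ ∀ k, (PiGram K n * X) k k = 0 := by
  rw [← fromBlocks_toBlocks X, fromBlocks_mem_gOneSet_iff, mem_autPiSet_iff_isSymm,
    PiGram.mul_fromBlocks, Sum.forall]
  simp only [fromBlocks_apply₁₁, fromBlocks_apply₂₂]
  tauto

theorem tildeAutSet_subset_autPiSet : tildeAutSet K n ⊆ autPiSet K n := by
  rintro _ ⟨A, B, C, hB, -, hC, rfl⟩
  exact fromBlocks_mem_autPiSet_iff.mpr ⟨hB, hC, rfl⟩

theorem commutator_mem_gOneSet {X Y : Matrix (Fin n ⊕ Fin n) (Fin n ⊕ Fin n) K}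
    (hX : X ∈ autPiSet K n) (hY : Y ∈ autPiSet K n) : X * Y - Y * X ∈ gOneSet K n := by
  rw [mem_autPiSet_iff_isSymm] at hX hY
  set J := PiGram K n
  have hJJ : ∀ M, J * (J * M) = M := fun M => by
    rw [← Matrix.mul_assoc, PiGram.mul_self, Matrix.one_mul]
  set N := (J * X) * J * (J * Y)
  have hN_eq : N = J * (X * Y) := by simp only [N, Matrix.mul_assoc, hJJ]
  have hNt : Nᵀ = J * (Y * X) := by
    rw [transpose_mul (J * X * J), transpose_mul (J * X), hX.eq, hY.eq,
      show Jᵀ = J from PiGram.transpose]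
    simp only [Matrix.mul_assoc, hJJ]
  have hJ_comm : J * (X * Y - Y * X) = N + Nᵀ := by
    rw [← Matrix.neg_eq_self_of_charTwo Nᵀ, ← sub_eq_add_neg, hNt, hN_eq, Matrix.mul_sub]
  rw [mem_gOneSet_iff, hJ_comm]
  exact ⟨isSymm_add_transpose_self N, Matrix.diag_add_transpose_self_eq_zero N⟩

end

/-- For `p = 2`, `ãut(Π_{2n})` is a Lie subalgebra of `gl(2n, K)` (closed under the
commutator bracket) and is sandwiched strictly between `aut⁽¹⁾(Π_{2n})` and
`aut(Π_{2n})`. -/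
theorem tildeAut_isSubalgebra_and_strictly_between
    {K : Type*} [Field K] [CharP K 2] {n : ℕ} (hn : 1 ≤ n) :
    (∀ X ∈ tildeAutSet K n, ∀ Y ∈ tildeAutSet K n, X * Y - Y * X ∈ tildeAutSet K n) ∧
    gOneSet K n ⊂ tildeAutSet K n ∧ tildeAutSet K n ⊂ autPiSet K n := by
  have : Nonempty (Fin n) := ⟨⟨0, hn⟩⟩
  refine ⟨fun X hX Y hY => gOneSet_subset_tildeAutSet <| commutator_mem_gOneSet
      (tildeAutSet_subset_autPiSet hX) (tildeAutSet_subset_autPiSet hY),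
    (Set.ssubset_iff_of_subset gOneSet_subset_tildeAutSet).mpr ⟨fromBlocks 0 0 1 0, ?_, ?_⟩,
    (Set.ssubset_iff_of_subset tildeAutSet_subset_autPiSet).mpr ⟨fromBlocks 0 1 0 0, ?_, ?_⟩⟩ <;>
  simp [fromBlocks_mem_tildeAutSet_iff, fromBlocks_mem_gOneSet_iff, fromBlocks_mem_autPiSet_iff]
end

section
/- For every f ∈ R the divergence of the contact field K_f equals Div K_f = (k+1)·∂₀f. In particular, when k is odd (so that k+1 = 0 in K), every contact vector field K_f is divergence-free, and hence the contact Lie algebra coincides with its divergence-free subalgebra. (This is the characteristic-2 analog of Div K_f = (2n+2−m)K₁(f), showing the contact algebra is divergence-free, hence not simple, when the relevant parity condition holds.) -/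
open MvPolynomial

/-- Index type for the variables `x₀, x₁, …, x_{2k}`: `none` is `x₀`, `Sum.inl i` is `x_i`
(for `1 ≤ i ≤ k`) and `Sum.inr i` is `x_{k+i}`. -/
abbrev ContactIdx (k : ℕ) := Option (Fin k ⊕ Fin k)

/-- The polynomial ring `R = K[x₀, x₁, …, x_{2k}]`. -/
abbrev ContactRing (K : Type*) [Field K] (k : ℕ) := MvPolynomial (ContactIdx k) K

noncomputable section

variable (K : Type*) [Field K] (k : ℕ)

/-- The half Euler operator `E'(f) = Σ_{i=1}^{k} x_i ∂_i f`. -/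
def eulerHalf (f : ContactRing K k) : ContactRing K k :=
  ∑ i : Fin k, X (some (Sum.inl i)) * pderiv (some (Sum.inl i)) f

/-- The contact vector field `K_f`, acting on `R`:
`K_f(h) = (f + E'f)∂₀h + (∂₀f)(Σ x_i ∂_i h) + Σ (∂_{k+i}f ∂_i h + ∂_i f ∂_{k+i} h)`. -/
def contactField (f : ContactRing K k) : ContactRing K k → ContactRing K k := fun h =>
  (f + eulerHalf K k f) * pderiv (none : ContactIdx k) h
    + pderiv (none : ContactIdx k) f *
        (∑ i : Fin k, X (some (Sum.inl i)) * pderiv (some (Sum.inl i)) h)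
    + ∑ i : Fin k,
        (pderiv (some (Sum.inr i)) f * pderiv (some (Sum.inl i)) h
          + pderiv (some (Sum.inl i)) f * pderiv (some (Sum.inr i)) h)

/-- The contact bracket
`{f,g} = (∂₀f)(g + E'g) + (f + E'f)(∂₀g) + Σ (∂_i f ∂_{k+i} g + ∂_{k+i} f ∂_i g)`. -/
def contactBracket (f g : ContactRing K k) : ContactRing K k :=
  pderiv (none : ContactIdx k) f * (g + eulerHalf K k g)
    + (f + eulerHalf K k f) * pderiv (none : ContactIdx k) g
    + ∑ i : Fin k,
        (pderiv (some (Sum.inl i)) f * pderiv (some (Sum.inr i)) g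
          + pderiv (some (Sum.inr i)) f * pderiv (some (Sum.inl i)) g)

end

noncomputable section

variable (K : Type*) [Field K] (k : ℕ)

/-- The coefficients of the contact field `K_f = Σ_j contactCoeff f j ∂_j`:
the coefficient of `∂₀` is `f + E'f`, that of `∂_i` is `(∂₀f)x_i + ∂_{k+i}f`, and that
of `∂_{k+i}` is `∂_i f`. -/
def contactCoeff (f : ContactRing K k) : ContactIdx k → ContactRing K k
  | none => f + eulerHalf K k f
  | some (Sum.inl i) =>
      pderiv (none : ContactIdx k) f * X (some (Sum.inl i)) + pderiv (some (Sum.inr i)) f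
  | some (Sum.inr i) => pderiv (some (Sum.inl i)) f

end

/-!
Writing `K_f = Σ_j c_j ∂_j`, each of the `k` coefficients `c_i = (∂₀f) x_i + ∂_{k+i}f` contributes
`∂₀f` to `Σ_j ∂_j c_j` through `∂_i x_i = 1`, and `c₀ = f + E'f` contributes one more `∂₀f`.
Every other term is a mixed second partial derivative of `f`, and by the symmetry of partial
derivatives each of them occurs exactly twice, so they cancel in characteristic 2.
-/

theorem MvPolynomial.pderiv_pderiv_comm {σ R : Type*} [CommSemiring R] (i j : σ)
    (f : MvPolynomial σ R) : pderiv i (pderiv j f) = pderiv j (pderiv i f) := by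
  classical
  have pderiv_pderiv_X (a b c : σ) : pderiv a (pderiv b (X c : MvPolynomial σ R)) = 0 := by
    rw [pderiv_X, Pi.single_apply]; split_ifs <;> simp
  induction f using MvPolynomial.induction_on with
  | C a => simp
  | add p q hp hq => simp only [map_add, hp, hq]
  | mul_X p n hp =>
    simp only [pderiv_mul, map_add, pderiv_pderiv_X, hp, mul_zero]
    ring

section

variable {K : Type*} [Field K] {k : ℕ}

theorem contactField_eq_sum_contactCoeff (f h : ContactRing K k) :
    contactField K k f h = ∑ j : ContactIdx k, contactCoeff K k f j * pderiv j h := by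
  rw [Fintype.sum_option, Fintype.sum_sum_type, contactField, contactCoeff, Finset.mul_sum,
    add_assoc, ← Finset.sum_add_distrib, ← Finset.sum_add_distrib]
  refine congrArg (fun x : ContactRing K k => _ + x) (Finset.sum_congr rfl fun i _ => ?_)
  simp only [contactCoeff]
  ring

theorem sum_pderiv_contactCoeff (f : ContactRing K k) :
    ∑ j : ContactIdx k, pderiv j (contactCoeff K k f j)
      = ((k + 1 : ℕ) : ContactRing K k) * pderiv none f
        + 2 * ∑ i : Fin k, (X (some (Sum.inl i)) * pderiv none (pderiv (some (Sum.inl i)) f)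
          + pderiv (some (Sum.inl i)) (pderiv (some (Sum.inr i)) f)) := by
  have term_inl (i : Fin k) : pderiv (some (Sum.inl i)) (contactCoeff K k f (some (Sum.inl i)))
      = X (some (Sum.inl i)) * pderiv none (pderiv (some (Sum.inl i)) f) + pderiv none f
        + pderiv (some (Sum.inl i)) (pderiv (some (Sum.inr i)) f) := by
    simp only [contactCoeff, map_add, pderiv_mul, pderiv_X_self, pderiv_pderiv_comm _ none]
    ring
  have term_inr (i : Fin k) : pderiv (some (Sum.inr i)) (contactCoeff K k f (some (Sum.inr i)))
      = pderiv (some (Sum.inl i)) (pderiv (some (Sum.inr i)) f) :=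
    pderiv_pderiv_comm _ _ f
  have term_none : pderiv none (contactCoeff K k f none)
      = pderiv none f
        + ∑ i : Fin k, X (some (Sum.inl i)) * pderiv none (pderiv (some (Sum.inl i)) f) := by
    simp only [contactCoeff, eulerHalf, map_add, map_sum, pderiv_mul,
      pderiv_X_of_ne (Option.some_ne_none _), zero_mul, zero_add]
  rw [Fintype.sum_option, Fintype.sum_sum_type, term_none]
  simp only [term_inl, term_inr, Finset.sum_add_distrib, Finset.sum_const,
    Finset.card_univ, Fintype.card_fin, nsmul_eq_mul]
  push_cast
  ring

end

theorem contactField_divergence_general {K : Type*} [Field K] [CharP K 2] {k : ℕ}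
    (f : ContactRing K k) :
    (∀ h, contactField K k f h = ∑ j : ContactIdx k, contactCoeff K k f j * pderiv j h) ∧
    (∑ j : ContactIdx k, pderiv j (contactCoeff K k f j))
      = ((k + 1 : ℕ) : ContactRing K k) * pderiv (none : ContactIdx k) f ∧
    (Odd k → (∑ j : ContactIdx k, pderiv j (contactCoeff K k f j)) = 0) := by
  have two_eq_zero : (2 : ContactRing K k) = 0 := CharTwo.two_eq_zero
  have divergence : ∑ j : ContactIdx k, pderiv j (contactCoeff K k f j)
      = ((k + 1 : ℕ) : ContactRing K k) * pderiv none f := by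
    rw [sum_pderiv_contactCoeff, two_eq_zero, zero_mul, add_zero]
  refine ⟨contactField_eq_sum_contactCoeff f, divergence, fun hk => ?_⟩
  rw [divergence, (CharP.cast_eq_zero_iff (ContactRing K k) 2 _).mpr (hk.add_one).two_dvd,
    zero_mul]

/-- For `p = 2`: `contactCoeff f` are indeed the coefficients of `K_f`, the divergence
`Div K_f = Σ_j ∂_j (coefficient of ∂_j)` equals `(k+1)·∂₀f`, and in particular if `k` is odd
(so that `k + 1 = 0` in `K`) every contact vector field is divergence-free, i.e. the contact
Lie algebra coincides with its divergence-free subalgebra. -/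
theorem contactField_divergence {K : Type*} [Field K] [CharP K 2] {k : ℕ} (hk : 1 ≤ k)
    (f : ContactRing K k) :
    (∀ h, contactField K k f h = ∑ j : ContactIdx k, contactCoeff K k f j * pderiv j h) ∧
    (∑ j : ContactIdx k, pderiv j (contactCoeff K k f j))
      = ((k + 1 : ℕ) : ContactRing K k) * pderiv (none : ContactIdx k) f ∧
    (Odd k → (∑ j : ContactIdx k, pderiv j (contactCoeff K k f j)) = 0) :=
  contactField_divergence_general f
end
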